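/- Let E be a CPTD map on L(H_i) (acting on the first factor of H_i ⊗ H_i via E ⊗ 𝟙), let Φ_i and ρ_i be density operators on H_i ⊗ H_i with t(E|Φ_i) > 0, and let Φ_o = (E⊗𝟙)[Φ_i]/t(E|Φ_i). Then for every CPTP map E₀ on L(H_i): |t(E|ρ_i) − t(E|Φ_i)| ≤ d·D(Φ_i,Φ₊) + d·t(E|Φ_i)·D(Φ_o, (E₀⊗𝟙)[Φ₊]), where d = dim H_i, D is the trace distance, and Φ₊ is the maximally entangled state. -/

import Mathlib

open Matrix Kronecker MeasureTheory ComplexOrder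

noncomputable section

def msqrt {α : Type*} [Fintype α] [DecidableEq α] (A : Matrix α α ℂ) : Matrix α α ℂ :=
  open scoped Classical in
  if h : A.PosSemidef then
    (h.1.eigenvectorUnitary : Matrix α α ℂ) *
      diagonal (fun i => ((Real.sqrt (h.1.eigenvalues i) : ℝ) : ℂ)) *
      (star h.1.eigenvectorUnitary : Matrix α α ℂ)
  else 0

def fid {α : Type*} [Fintype α] [DecidableEq α] (ρ σ : Matrix α α ℂ) : ℝ :=
  ((msqrt (msqrt ρ * σ * msqrt ρ)).trace).re ^ 2

def sineDist {α : Type*} [Fintype α] [DecidableEq α] (ρ σ : Matrix α α ℂ) : ℝ :=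
  Real.sqrt (1 - fid ρ σ)

def traceDist {α : Type*} [Fintype α] [DecidableEq α] (ρ σ : Matrix α α ℂ) : ℝ :=
  (1/2) * ((msqrt ((ρ - σ)ᴴ * (ρ - σ))).trace).re

def IsDensity {α : Type*} [Fintype α] (ρ : Matrix α α ℂ) : Prop :=
  ρ.PosSemidef ∧ ρ.trace = 1

def IsPureState {α : Type*} [Fintype α] (ρ : Matrix α α ℂ) : Prop :=
  IsDensity ρ ∧ ∃ ψ : α → ℂ, ρ = Matrix.vecMulVec ψ (star ψ)

def tr' {α : Type*} [Fintype α] (A : Matrix α α ℂ) : ℝ := A.trace.re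

def nstate {α : Type*} [Fintype α] (ρ : Matrix α α ℂ) : Matrix α α ℂ :=
  (((tr' ρ : ℝ) : ℂ))⁻¹ • ρ

def IsCPTD {α β : Type*} [Fintype α] [Fintype β] [DecidableEq α] [DecidableEq β]
    (E : Matrix α α ℂ →ₗ[ℂ] Matrix β β ℂ) : Prop :=
  ∃ (k : ℕ) (K : Fin k → Matrix β α ℂ),
    (∀ ρ, E ρ = ∑ i, K i * ρ * (K i)ᴴ) ∧ (1 - ∑ i, (K i)ᴴ * K i).PosSemidef

def IsCPTP {α β : Type*} [Fintype α] [Fintype β] [DecidableEq α] [DecidableEq β]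
    (E : Matrix α α ℂ →ₗ[ℂ] Matrix β β ℂ) : Prop :=
  ∃ (k : ℕ) (K : Fin k → Matrix β α ℂ),
    (∀ ρ, E ρ = ∑ i, K i * ρ * (K i)ᴴ) ∧ (∑ i, (K i)ᴴ * K i = 1)

def tensId {α β γ : Type*} [Fintype α]
    (E : Matrix α α ℂ → Matrix β β ℂ)
    (ρ : Matrix (α × γ) (α × γ) ℂ) : Matrix (β × γ) (β × γ) ℂ :=
  Matrix.of fun p q => E (Matrix.of fun a b => ρ (a, p.2) (b, q.2)) p.1 q.1

def maxEnt (d : ℕ) : Matrix (Fin d × Fin d) (Fin d × Fin d) ℂ :=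
  Matrix.of fun p q => if p.1 = p.2 ∧ q.1 = q.2 then ((d : ℂ))⁻¹ else 0

def ptraceSnd {α β : Type*} [Fintype β] (ρ : Matrix (α × β) (α × β) ℂ) : Matrix α α ℂ :=
  Matrix.of fun a b => ∑ j, ρ (a, j) (b, j)

def ptraceFst {α β : Type*} [Fintype α] (ρ : Matrix (α × β) (α × β) ℂ) : Matrix β β ℂ :=
  Matrix.of fun i j => ∑ a, ρ (a, i) (a, j)

def choiSine {m n : ℕ} (E₁ E₂ : Matrix (Fin m) (Fin m) ℂ →ₗ[ℂ] Matrix (Fin n) (Fin n) ℂ) : ℝ :=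
  sineDist (nstate (tensId (⇑E₁) (maxEnt m))) (nstate (tensId (⇑E₂) (maxEnt m)))

def diamondSine {m n : ℕ} (E₁ E₂ : Matrix (Fin m) (Fin m) ℂ →ₗ[ℂ] Matrix (Fin n) (Fin n) ℂ) : ℝ :=
  sSup { x | ∃ ρ : Matrix (Fin m × Fin m) (Fin m × Fin m) ℂ, IsPureState ρ ∧
    tr' (tensId (⇑E₁) ρ) ≠ 0 ∧ tr' (tensId (⇑E₂) ρ) ≠ 0 ∧
    x = sineDist (nstate (tensId (⇑E₁) ρ)) (nstate (tensId (⇑E₂) ρ)) }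

/-!
Write `σ` for the partial trace of `ρᵢ` over the second factor and `G = ∑ Kᵢᴴ Kᵢ` for the Kraus
operators of `E`. Then `t(E|ρᵢ) = Tr(σ G) = d · Tr(Φ₊ (G ⊗ σᵀ))`, by the transpose trick for `Φ₊`.
Replacing `Φ₊` by `Φᵢ` turns this into
`d · Tr((E ⊗ 𝟙)[Φᵢ] (𝟙 ⊗ σᵀ)) = d · t(E|Φᵢ) · Tr(Φₒ (𝟙 ⊗ σᵀ))`, and replacing `Φₒ` by
`(E₀ ⊗ 𝟙)[Φ₊]` leaves `d · t(E|Φᵢ) · Tr(Φ₊ (𝟙 ⊗ σᵀ)) = t(E|Φᵢ)`, because `E₀` is trace preserving.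
The two replacement errors have the form `Tr((ρ₁ - ρ₂) P)` with `0 ≤ P ≤ 𝟙`, and such a term is at
most `D(ρ₁, ρ₂)`: split `ρ₁ - ρ₂` into its positive and negative parts, which have equal trace.
-/

open scoped MatrixOrder

section TraceDistance

variable {n : Type*} [Fintype n] [DecidableEq n]

lemma msqrt_eq_cfcSqrt {A : Matrix n n ℂ} (hA : A.PosSemidef) : msqrt A = CFC.sqrt A := by
  rw [msqrt, dif_pos hA, CFC.sqrt_eq_cfc, cfc_nnreal_eq_real _ A hA.nonneg, hA.1.cfc_eq]
  simp only [IsHermitian.cfc, Unitary.conjStarAlgAut_apply, Function.comp_def]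
  congr 3
  funext i
  simp [hA.eigenvalues_nonneg i]

lemma traceDist_eq_half_re_trace_cfcAbs (ρ σ : Matrix n n ℂ) :
    traceDist ρ σ = (1 / 2) * (CFC.abs (ρ - σ)).trace.re := by
  rw [traceDist, msqrt_eq_cfcSqrt (posSemidef_conjTranspose_mul_self _), CFC.abs,
    star_eq_conjTranspose]

lemma re_trace_mul_nonneg {A P : Matrix n n ℂ} (hA : 0 ≤ A) (hP : 0 ≤ P) :
    0 ≤ (A * P).trace.re := by
  have hconj : 0 ≤ CFC.sqrt A * P * CFC.sqrt A := by
    simpa [(CFC.sqrt_nonneg A).star_eq] using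
      star_left_conjugate_nonneg hP (CFC.sqrt A)
  have htrace : (A * P).trace = (CFC.sqrt A * P * CFC.sqrt A).trace := by
    rw [trace_mul_cycle, CFC.sqrt_mul_sqrt_self A hA]
  rw [htrace]
  exact (Complex.nonneg_iff.mp hconj.posSemidef.trace_nonneg).1

lemma re_trace_mul_le_of_le_one {A P : Matrix n n ℂ} (hA : 0 ≤ A) (hP : P ≤ 1) :
    (A * P).trace.re ≤ A.trace.re := by
  have := re_trace_mul_nonneg hA (sub_nonneg.mpr hP)
  rwa [Matrix.mul_sub, Matrix.mul_one, trace_sub, Complex.sub_re, sub_nonneg] at this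

lemma abs_re_trace_mul_le_half_re_trace_cfcAbs {Y P : Matrix n n ℂ} (hY : IsSelfAdjoint Y)
    (htr : Y.trace = 0) (hP₀ : 0 ≤ P) (hP₁ : P ≤ 1) :
    |(Y * P).trace.re| ≤ (1 / 2) * (CFC.abs Y).trace.re := by
  have hsub : (Y * P).trace.re = (Y⁺ * P).trace.re - (Y⁻ * P).trace.re := by
    rw [← Complex.sub_re, ← trace_sub, ← Matrix.sub_mul, CFC.posPart_sub_negPart Y hY]
  have hdiff : (Y⁺).trace.re - (Y⁻).trace.re = 0 := by
    rw [← Complex.sub_re, ← trace_sub, CFC.posPart_sub_negPart Y hY, htr, Complex.zero_re]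
  have hsum : (CFC.abs Y).trace.re = (Y⁺).trace.re + (Y⁻).trace.re := by
    rw [← Complex.add_re, ← trace_add, CFC.posPart_add_negPart Y hY]
  have hpos₀ := re_trace_mul_nonneg (CFC.posPart_nonneg Y) hP₀
  have hneg₀ := re_trace_mul_nonneg (CFC.negPart_nonneg Y) hP₀
  have hpos₁ := re_trace_mul_le_of_le_one (CFC.posPart_nonneg Y) hP₁
  have hneg₁ := re_trace_mul_le_of_le_one (CFC.negPart_nonneg Y) hP₁
  rw [hsub, hsum, abs_le]
  constructor <;> linarith

theorem abs_re_trace_sub_mul_le_traceDist {ρ σ P : Matrix n n ℂ} (hρ : ρ.IsHermitian)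
    (hσ : σ.IsHermitian) (htr : ρ.trace = σ.trace) (hP₀ : 0 ≤ P) (hP₁ : P ≤ 1) :
    |((ρ - σ) * P).trace.re| ≤ traceDist ρ σ := by
  rw [traceDist_eq_half_re_trace_cfcAbs]
  exact abs_re_trace_mul_le_half_re_trace_cfcAbs (hρ.sub hσ) (by rw [trace_sub, htr, sub_self])
    hP₀ hP₁

end TraceDistance

section Kronecker

variable {m n : Type*} [Fintype m] [Fintype n]

lemma kronecker_nonneg {A : Matrix m m ℂ} {B : Matrix n n ℂ} (hA : 0 ≤ A) (hB : 0 ≤ B) :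
    0 ≤ A ⊗ₖ B :=
  (hA.posSemidef.kronecker hB.posSemidef).nonneg

lemma kronecker_le_one [DecidableEq m] [DecidableEq n] {A : Matrix m m ℂ} {B : Matrix n n ℂ}
    (hA : A ≤ 1) (hB₀ : 0 ≤ B) (hB₁ : B ≤ 1) : A ⊗ₖ B ≤ 1 := by
  have hsplit : (1 : Matrix (m × n) (m × n) ℂ) - A ⊗ₖ B = (1 - A) ⊗ₖ B + 1 ⊗ₖ (1 - B) := by
    ext ⟨a, j⟩ ⟨b, k⟩
    simp only [Matrix.sub_apply, Matrix.add_apply, kronecker_apply, one_apply]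
    split_ifs <;> simp_all <;> ring
  rw [← sub_nonneg, hsplit]
  exact add_nonneg (kronecker_nonneg (sub_nonneg.mpr hA) hB₀)
    (kronecker_nonneg zero_le_one (sub_nonneg.mpr hB₁))

end Kronecker

section PartialTrace

lemma trace_ptraceSnd {α β : Type*} [Fintype α] [Fintype β] (ρ : Matrix (α × β) (α × β) ℂ) :
    (ptraceSnd ρ).trace = ρ.trace := by
  simp [ptraceSnd, trace, Fintype.sum_prod_type]

lemma posSemidef_ptraceSnd {α β : Type*} [Fintype β] {ρ : Matrix (α × β) (α × β) ℂ}
    (hρ : ρ.PosSemidef) : (ptraceSnd ρ).PosSemidef := by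
  have hsum : ptraceSnd ρ = ∑ j, ρ.submatrix (·, j) (·, j) := by
    ext a b
    simp [ptraceSnd, Matrix.sum_apply]
  rw [hsum]
  exact posSemidef_sum _ fun j _ => hρ.submatrix _

lemma trace_mul_kronecker_one {α β : Type*} [Fintype α] [Fintype β] [DecidableEq β]
    (ρ : Matrix (α × β) (α × β) ℂ) (A : Matrix α α ℂ) :
    (ρ * (A ⊗ₖ (1 : Matrix β β ℂ))).trace = (ptraceSnd ρ * A).trace := by
  simp [trace, mul_apply, ptraceSnd, one_apply, Fintype.sum_prod_type, Finset.sum_mul]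
  exact Finset.sum_congr rfl fun _ _ => Finset.sum_comm

end PartialTrace

section KrausMap

variable {ι α β γ : Type*} [Fintype ι] [Fintype α] [Fintype γ] [DecidableEq γ]
  {E : Matrix α α ℂ → Matrix β β ℂ} {K : ι → Matrix β α ℂ}

lemma tensId_eq_sum_kraus (hK : ∀ ρ, E ρ = ∑ i, K i * ρ * (K i)ᴴ)
    (ρ : Matrix (α × γ) (α × γ) ℂ) :
    tensId E ρ = ∑ i, (K i ⊗ₖ (1 : Matrix γ γ ℂ)) * ρ * (K i ⊗ₖ (1 : Matrix γ γ ℂ))ᴴ := by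
  ext ⟨p1, p2⟩ ⟨q1, q2⟩
  simp [tensId, hK, Matrix.sum_apply, mul_apply, one_apply, conjTranspose_kronecker,
    Fintype.sum_prod_type]

lemma isHermitian_tensId [Fintype β] (hK : ∀ ρ, E ρ = ∑ i, K i * ρ * (K i)ᴴ)
    {ρ : Matrix (α × γ) (α × γ) ℂ} (hρ : ρ.IsHermitian) : (tensId E ρ).IsHermitian := by
  rw [tensId_eq_sum_kraus hK]
  exact isSelfAdjoint_sum _ fun i _ => isHermitian_mul_mul_conjTranspose _ hρ

lemma trace_tensId_mul_one_kronecker [Fintype β] [DecidableEq β]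
    (hK : ∀ ρ, E ρ = ∑ i, K i * ρ * (K i)ᴴ) (ρ : Matrix (α × γ) (α × γ) ℂ) (P : Matrix γ γ ℂ) :
    (tensId E ρ * ((1 : Matrix β β ℂ) ⊗ₖ P)).trace =
      (ρ * ((∑ i, (K i)ᴴ * K i) ⊗ₖ P)).trace := by
  have hsum : (∑ i, (K i)ᴴ * K i) ⊗ₖ P = ∑ i, ((K i)ᴴ * K i) ⊗ₖ P := by
    ext; simp [Matrix.sum_apply, Finset.sum_mul]
  rw [tensId_eq_sum_kraus hK, Finset.sum_mul, trace_sum, hsum, Finset.mul_sum, trace_sum]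
  refine Finset.sum_congr rfl fun i _ => ?_
  rw [Matrix.mul_assoc, trace_mul_comm, ← Matrix.mul_assoc,
    conjTranspose_kronecker, conjTranspose_one, ← mul_kronecker_mul, ← mul_kronecker_mul,
    Matrix.one_mul, Matrix.mul_one, Matrix.mul_one, trace_mul_comm]

lemma trace_tensId [Fintype β] [DecidableEq β] (hK : ∀ ρ, E ρ = ∑ i, K i * ρ * (K i)ᴴ)
    (ρ : Matrix (α × γ) (α × γ) ℂ) :
    (tensId E ρ).trace = (ρ * ((∑ i, (K i)ᴴ * K i) ⊗ₖ (1 : Matrix γ γ ℂ))).trace := by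
  simpa using trace_tensId_mul_one_kronecker hK ρ 1

lemma trace_tensId_of_sum_eq_one [Fintype β] [DecidableEq β] [DecidableEq α]
    (hK : ∀ ρ, E ρ = ∑ i, K i * ρ * (K i)ᴴ) (hK₁ : ∑ i, (K i)ᴴ * K i = 1)
    (ρ : Matrix (α × γ) (α × γ) ℂ) : (tensId E ρ).trace = ρ.trace := by
  simp [trace_tensId hK, hK₁]

end KrausMap

section States

variable {n : Type*} [Fintype n]

lemma Matrix.IsHermitian.ofReal_tr' {X : Matrix n n ℂ} (hX : X.IsHermitian) :
    ((tr' X : ℝ) : ℂ) = X.trace :=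
  Complex.conj_eq_iff_re.mp (by rw [← Complex.star_def, ← trace_conjTranspose, hX.eq])

lemma Matrix.IsHermitian.nstate {X : Matrix n n ℂ} (hX : X.IsHermitian) :
    (nstate X).IsHermitian :=
  hX.smul (by rw [IsSelfAdjoint, Complex.star_def, map_inv₀, Complex.conj_ofReal])

lemma trace_nstate {X : Matrix n n ℂ} (hX : X.IsHermitian) (h : tr' X ≠ 0) :
    (nstate X).trace = 1 := by
  rw [_root_.nstate, trace_smul, ← hX.ofReal_tr', smul_eq_mul,
    inv_mul_cancel₀ (by exact_mod_cast h)]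

lemma ofReal_tr'_mul_trace_nstate_mul {X : Matrix n n ℂ} (h : tr' X ≠ 0) (P : Matrix n n ℂ) :
    (tr' X : ℂ) * (nstate X * P).trace = (X * P).trace := by
  rw [_root_.nstate, smul_mul, trace_smul, smul_eq_mul, ← mul_assoc,
    mul_inv_cancel₀ (by exact_mod_cast h), one_mul]

lemma Matrix.PosSemidef.le_trace_smul_one [DecidableEq n] {A : Matrix n n ℂ} (hA : A.PosSemidef) :
    A ≤ A.trace.re • (1 : Matrix n n ℂ) := by
  rw [← Algebra.algebraMap_eq_smul_one]
  refine le_algebraMap_of_spectrum_le (fun x hx => ?_) hA.1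
  rw [hA.1.spectrum_real_eq_range_eigenvalues] at hx
  obtain ⟨i, rfl⟩ := hx
  simpa [hA.1.trace_eq_sum_eigenvalues] using
    Finset.single_le_sum (fun j _ => hA.eigenvalues_nonneg j) (Finset.mem_univ i)

lemma IsDensity.transpose {ρ : Matrix n n ℂ} (hρ : IsDensity ρ) : IsDensity ρᵀ :=
  ⟨hρ.1.transpose, by rw [trace_transpose, hρ.2]⟩

lemma IsDensity.le_one [DecidableEq n] {ρ : Matrix n n ℂ} (hρ : IsDensity ρ) : ρ ≤ 1 := by
  simpa [hρ.2] using hρ.1.le_trace_smul_one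

lemma IsDensity.ptraceSnd {α β : Type*} [Fintype α] [Fintype β] {ρ : Matrix (α × β) (α × β) ℂ}
    (hρ : IsDensity ρ) : IsDensity (ptraceSnd ρ) :=
  ⟨posSemidef_ptraceSnd hρ.1, by rw [trace_ptraceSnd, hρ.2]⟩

end States

section MaxEnt

lemma isHermitian_maxEnt (d : ℕ) : (maxEnt d).IsHermitian := by
  ext p q
  simp only [maxEnt, conjTranspose_apply, of_apply]
  split_ifs <;> simp_all

lemma trace_maxEnt {d : ℕ} (hd : d ≠ 0) : (maxEnt d).trace = 1 := by
  simp [maxEnt, trace, Fintype.sum_prod_type, hd]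

lemma trace_maxEnt_mul_kronecker_transpose {d : ℕ} (A B : Matrix (Fin d) (Fin d) ℂ) :
    (maxEnt d * (A ⊗ₖ Bᵀ)).trace = (d : ℂ)⁻¹ * (A * B).trace := by
  simp [maxEnt, trace, mul_apply, Fintype.sum_prod_type, Finset.mul_sum, ite_and]
  exact Finset.sum_comm

end MaxEnt

section Transmissivity

variable {d : ℕ} {ι ι₀ : Type*} [Fintype ι] [Fintype ι₀]
  {E E₀ : Matrix (Fin d) (Fin d) ℂ → Matrix (Fin d) (Fin d) ℂ}
  {K : ι → Matrix (Fin d) (Fin d) ℂ} {K₀ : ι₀ → Matrix (Fin d) (Fin d) ℂ}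

lemma tr'_tensId_sub_tr'_tensId_eq (hd : d ≠ 0) (hK : ∀ ρ, E ρ = ∑ i, K i * ρ * (K i)ᴴ)
    (hK₀ : ∀ ρ, E₀ ρ = ∑ i, K₀ i * ρ * (K₀ i)ᴴ) (hK₀₁ : ∑ i, (K₀ i)ᴴ * K₀ i = 1)
    {Φ ρ : Matrix (Fin d × Fin d) (Fin d × Fin d) ℂ} (hρ : ρ.trace = 1)
    (ht : tr' (tensId E Φ) ≠ 0) :
    tr' (tensId E ρ) - tr' (tensId E Φ) =
      d * tr' (tensId E Φ) * ((nstate (tensId E Φ) - tensId E₀ (maxEnt d)) *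
          (1 ⊗ₖ (ptraceSnd ρ)ᵀ)).trace.re -
        d * ((Φ - maxEnt d) * ((∑ i, (K i)ᴴ * K i) ⊗ₖ (ptraceSnd ρ)ᵀ)).trace.re := by
  set σ := ptraceSnd ρ
  set G := ∑ i, (K i)ᴴ * K i
  set t := tr' (tensId E Φ)
  have hd' : (d : ℂ) ≠ 0 := Nat.cast_ne_zero.mpr hd
  have hρE : (tensId E ρ).trace = d * (maxEnt d * (G ⊗ₖ σᵀ)).trace := by
    rw [trace_tensId hK, trace_mul_kronecker_one, trace_maxEnt_mul_kronecker_transpose,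
      ← mul_assoc, mul_inv_cancel₀ hd', one_mul, trace_mul_comm]
  have hΦE : (Φ * (G ⊗ₖ σᵀ)).trace = t * (nstate (tensId E Φ) * (1 ⊗ₖ σᵀ)).trace := by
    rw [ofReal_tr'_mul_trace_nstate_mul ht, trace_tensId_mul_one_kronecker hK]
  have hE₀ : (tensId E₀ (maxEnt d) * (1 ⊗ₖ σᵀ)).trace = (d : ℂ)⁻¹ := by
    rw [trace_tensId_mul_one_kronecker hK₀, hK₀₁, trace_maxEnt_mul_kronecker_transpose, one_mul,
      trace_ptraceSnd, hρ, mul_one]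
  have key : (tensId E ρ).trace - t =
      d * t * ((nstate (tensId E Φ) - tensId E₀ (maxEnt d)) * (1 ⊗ₖ σᵀ)).trace -
        d * ((Φ - maxEnt d) * (G ⊗ₖ σᵀ)).trace := by
    rw [Matrix.sub_mul, Matrix.sub_mul, trace_sub, trace_sub, hρE, hΦE, hE₀]
    field_simp
    ring
  simpa [tr'] using congrArg Complex.re key

end Transmissivity

/-- Bound on the transmissivity difference between two input states. -/
theorem transmissivity_bound {d : ℕ}
    (E : Matrix (Fin d) (Fin d) ℂ →ₗ[ℂ] Matrix (Fin d) (Fin d) ℂ) (hE : IsCPTD E)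
    (Φi ρi : Matrix (Fin d × Fin d) (Fin d × Fin d) ℂ)
    (hΦ : IsDensity Φi) (hρ : IsDensity ρi)
    (ht : 0 < tr' (tensId (⇑E) Φi))
    (E₀ : Matrix (Fin d) (Fin d) ℂ →ₗ[ℂ] Matrix (Fin d) (Fin d) ℂ) (hE₀ : IsCPTP E₀) :
    |tr' (tensId (⇑E) ρi) - tr' (tensId (⇑E) Φi)| ≤
      (d : ℝ) * traceDist Φi (maxEnt d) +
      (d : ℝ) * tr' (tensId (⇑E) Φi) *
        traceDist (nstate (tensId (⇑E) Φi)) (tensId (⇑E₀) (maxEnt d)) := by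
  obtain ⟨k, K, hK, hG₁⟩ := hE
  obtain ⟨k₀, K₀, hK₀, hK₀₁⟩ := hE₀
  have hd : d ≠ 0 := by
    rintro rfl
    simp [tr', trace] at ht
  have hσ : IsDensity (ptraceSnd ρi)ᵀ := hρ.ptraceSnd.transpose
  have hG₀ : 0 ≤ ∑ i, (K i)ᴴ * K i :=
    (posSemidef_sum _ fun i _ => posSemidef_conjTranspose_mul_self (K i)).nonneg
  have hEΦ := isHermitian_tensId hK hΦ.1.1
  have h₁ := abs_re_trace_sub_mul_le_traceDist hΦ.1.1 (isHermitian_maxEnt d)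
    (by rw [hΦ.2, trace_maxEnt hd]) (kronecker_nonneg hG₀ hσ.1.nonneg)
    (kronecker_le_one (sub_nonneg.mp hG₁.nonneg) hσ.1.nonneg hσ.le_one)
  have h₂ := abs_re_trace_sub_mul_le_traceDist hEΦ.nstate
    (isHermitian_tensId hK₀ (isHermitian_maxEnt d))
    (by rw [trace_nstate hEΦ ht.ne', trace_tensId_of_sum_eq_one hK₀ hK₀₁, trace_maxEnt hd])
    (kronecker_nonneg zero_le_one hσ.1.nonneg) (kronecker_le_one le_rfl hσ.1.nonneg hσ.le_one)
  rw [tr'_tensId_sub_tr'_tensId_eq hd hK hK₀ hK₀₁ hρ.2 ht.ne']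
  refine (abs_sub _ _).trans ?_
  rw [abs_mul, abs_mul, abs_mul, Nat.abs_cast, abs_of_pos ht, add_comm]
  gcongr
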